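/- arXiv:0811.1793 — 2 statements merged into one kernel-verified Lean document; each statement's English description precedes it below -/
import Mathlib

section
/- Let f be a self-reciprocal monic polynomial of even degree N over F_ℓ (ℓ an odd prime), and write f(x) = x^{N/2} h(x + x⁻¹) with h monic of degree N/2. If f is irreducible over F_ℓ, then h is irreducible over F_ℓ and h(2)·h(−2) is a nonsquare in F_ℓ. -/
/-!
Let `α` be a root of `f` and `β = α + α⁻¹`. Since `f(α) = α^{N/2} h(β)`, `β` is a root of `h`;
and `α` is a root of `X² - βX + 1` over `F(β)`. In the tower `F ⊆ F(β) ⊆ F(α)` with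
`[F(α) : F] = N`, this forces `[F(β) : F] = N/2`, so `h` is the minimal polynomial of `β`.
On the finite field `L = F(β)`, `h(2)h(-2) = N_{L/F}(β² - 4)`, and by Euler's criterion in `L`
and in `F` a norm is a square only if the element is. But `β² - 4 = (α - α⁻¹)²`, so a square
root of it in `L` would put `α` in `L`.
-/

open Polynomial Finset IntermediateField Module

theorem FiniteField.isSquare_of_isSquare_norm {F L : Type*} [Field F] [Field L] [Algebra F L]
    [Finite L] (hF : ringChar F ≠ 2) {u : L} (hu : IsSquare (Algebra.norm F u)) :
    IsSquare u := by
  have := Finite.of_injective _ (algebraMap F L).injective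
  have := Fintype.ofFinite F
  have := Fintype.ofFinite L
  rcases eq_or_ne u 0 with rfl | hu0
  · exact IsSquare.zero
  have hL : ringChar L ≠ 2 := Algebra.ringChar_eq F L ▸ hF
  obtain ⟨s, hs⟩ := hu
  have hs0 : s ≠ 0 := by
    rintro rfl
    exact hu0 (by simpa using hs)
  set q := Fintype.card F
  obtain ⟨k, hk⟩ : 2 ∣ q - 1 := by have := FiniteField.odd_card_of_char_ne_two hF; omega
  obtain ⟨E, hE⟩ : q - 1 ∣ Fintype.card L - 1 := by
    simpa [Module.card_eq_pow_finrank (K := F) (V := L)] using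
      Nat.sub_dvd_pow_sub_pow q 1 (finrank F L)
  have hq : 0 < q - 1 := by have := Fintype.one_lt_card (α := F); omega
  have hnorm : algebraMap F L (Algebra.norm F u) = u ^ E := by
    rw [FiniteField.algebraMap_norm_eq_pow, ← Fintype.card_eq_nat_card,
      ← Fintype.card_eq_nat_card, hE, Nat.mul_div_cancel_left _ hq]
  have hexp : Fintype.card L / 2 = E * k := by
    have := FiniteField.odd_card_of_char_ne_two hL
    have : Fintype.card L - 1 = 2 * (E * k) := by rw [hE, hk]; ring
    omega
  rw [FiniteField.isSquare_iff hL hu0, hexp, pow_mul, ← hnorm, hs, ← pow_two, ← map_pow,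
    ← pow_mul, ← hk, FiniteField.pow_card_sub_one_eq_one s hs0, map_one]

theorem PowerBasis.norm_algebraMap_sub_gen {R S : Type*} [CommRing R] [CommRing S] [Algebra R S]
    (pb : PowerBasis R S) (c : R) :
    Algebra.norm R (algebraMap R S c - pb.gen) = (minpoly R pb.gen).eval c := by
  rw [Algebra.norm_eq_matrix_det pb.basis, ← charpoly_leftMulMatrix, Matrix.eval_charpoly,
    map_sub, AlgHom.commutes, Matrix.algebraMap_eq_diagonal]
  rfl

theorem FiniteField.isSquare_gen_sq_sub_four {F L : Type*} [Field F] [Field L] [Algebra F L]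
    [Finite L] (hF : ringChar F ≠ 2) (pb : PowerBasis F L)
    (hsq : IsSquare ((minpoly F pb.gen).eval 2 * (minpoly F pb.gen).eval (-2))) :
    IsSquare (pb.gen ^ 2 - 4) := by
  rw [← pb.norm_algebraMap_sub_gen, ← pb.norm_algebraMap_sub_gen, ← map_mul] at hsq
  convert FiniteField.isSquare_of_isSquare_norm hF hsq using 1
  simp only [map_ofNat, map_neg]
  ring

theorem Polynomial.aeval_sum_X_pow_mul_X_sq_add_one_pow {R K : Type*} [CommRing R] [Field K]
    [Algebra R K] {h : R[X]} {m : ℕ} (hm : h.natDegree ≤ m) {α : K} (hα : α ≠ 0) :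
    aeval α (∑ i ∈ range (m + 1), C (h.coeff i) * X ^ (m - i) * (X ^ 2 + 1) ^ i) =
      α ^ m * aeval (α + α⁻¹) h := by
  have hsq : α ^ 2 + 1 = α * (α + α⁻¹) := by field_simp
  rw [map_sum, aeval_eq_sum_range' (Nat.lt_succ_of_le hm), Finset.mul_sum]
  refine Finset.sum_congr rfl fun i hi => ?_
  have hsplit : α ^ m = α ^ (m - i) * α ^ i := by
    rw [← pow_add, Nat.sub_add_cancel (Nat.lt_succ_iff.mp (mem_range.mp hi))]
  simp only [map_mul, map_pow, map_add, aeval_C, aeval_X, map_one, Algebra.smul_def,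
    hsplit]
  rw [hsq, mul_pow]
  ring

theorem Polynomial.Irreducible.ne_zero_of_aeval_eq_zero {F K : Type*} [Field F] [CommRing K]
    [Nontrivial K] [Algebra F K] {f : F[X]} (hf : Irreducible f) (hdeg : f.natDegree ≠ 1) {α : K}
    (hα : aeval α f = 0) : α ≠ 0 := by
  rintro rfl
  have hX : X ∣ f := by
    rw [X_dvd_iff, ← (algebraMap F K).injective.eq_iff, coeff_zero_eq_aeval_zero', hα, map_zero]
  have := natDegree_le_of_dvd (irreducible_X.dvd_symm hf hX) X_ne_zero
  have := hf.natDegree_pos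
  rw [natDegree_X] at *
  omega

section AddInv

variable {F K : Type*} [Field F] [Field K] [Algebra F K] {α : K}

theorem finrank_le_two_of_add_inv_mem (hgen : F⟮α⟯ = ⊤) (hα : α ≠ 0)
    {L : IntermediateField F K} (hβ : α + α⁻¹ ∈ L) : finrank L K ≤ 2 := by
  set p : L[X] := X ^ 2 - C ⟨α + α⁻¹, hβ⟩ * X + 1
  have hp : p.Monic := by unfold p; monicity!
  have hpα : aeval α p = 0 := by
    simp only [p, map_add, map_sub, map_mul, map_pow, aeval_X, aeval_C, map_one,
      IntermediateField.algebraMap_apply]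
    linear_combination -mul_inv_cancel₀ hα
  have hint : IsIntegral L α := ⟨p, hp, hpα⟩
  rw [← finrank_top', ← adjoin_eq_top_of_adjoin_eq_top F hgen, adjoin.finrank hint]
  calc (minpoly L α).natDegree ≤ p.natDegree := natDegree_le_natDegree (minpoly.min L α hp hpα)
    _ ≤ 2 := by unfold p; compute_degree

theorem finrank_adjoin_add_inv [FiniteDimensional F K] (hgen : F⟮α⟯ = ⊤) (hα : α ≠ 0)
    {h : F[X]} {m : ℕ} (h0 : h ≠ 0) (hdeg : h.natDegree = m) (hroot : aeval (α + α⁻¹) h = 0)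
    (hK : finrank F K = 2 * m) : finrank F F⟮α + α⁻¹⟯ = m := by
  have hle : finrank F F⟮α + α⁻¹⟯ ≤ m := by
    rw [adjoin.finrank (.of_finite F _), ← hdeg]
    exact natDegree_le_of_dvd (minpoly.dvd F _ hroot) h0
  have htwo := finrank_le_two_of_add_inv_mem hgen hα (mem_adjoin_simple_self F (α + α⁻¹))
  have htower := Module.finrank_mul_finrank F F⟮α + α⁻¹⟯ K
  nlinarith

theorem minpoly_add_inv_eq [FiniteDimensional F K] (hgen : F⟮α⟯ = ⊤) (hα : α ≠ 0)
    {h : F[X]} {m : ℕ} (hmonic : h.Monic) (hdeg : h.natDegree = m)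
    (hroot : aeval (α + α⁻¹) h = 0) (hK : finrank F K = 2 * m) :
    minpoly F (α + α⁻¹) = h := by
  refine (eq_of_monic_of_dvd_of_natDegree_le (minpoly.monic (.of_finite F _)) hmonic
    (minpoly.dvd F _ hroot) ?_).symm
  rw [← adjoin.finrank (.of_finite F _),
    finrank_adjoin_add_inv hgen hα hmonic.ne_zero hdeg hroot hK, hdeg]

theorem mem_of_sq_eq_add_inv_sq_sub_four (h2 : (2 : K) ≠ 0) (hα : α ≠ 0) {L : Subfield K}
    (hβ : α + α⁻¹ ∈ L) {w : K} (hw : w ∈ L) (hw2 : w ^ 2 = (α + α⁻¹) ^ 2 - 4) : α ∈ L := by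
  have hfac : (2 * α - (α + α⁻¹) - w) * (2 * α - (α + α⁻¹) + w) = 0 := by
    linear_combination -hw2 - 4 * mul_inv_cancel₀ hα
  have h2L : (2 : K)⁻¹ ∈ L := inv_mem (ofNat_mem L 2)
  rcases mul_eq_zero.mp hfac with h | h
  · have : α = (α + α⁻¹ + w) * 2⁻¹ := by rw [eq_mul_inv_iff_mul_eq₀ h2]; linear_combination h
    exact this ▸ mul_mem (add_mem hβ hw) h2L
  · have : α = (α + α⁻¹ - w) * 2⁻¹ := by rw [eq_mul_inv_iff_mul_eq₀ h2]; linear_combination h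
    exact this ▸ mul_mem (sub_mem hβ hw) h2L

theorem not_isSquare_eval_two_mul_eval_neg_two [Finite K] (hF : ringChar F ≠ 2)
    (hgen : F⟮α⟯ = ⊤) (hα : α ≠ 0) {h : F[X]} {m : ℕ} (hm : 0 < m) (hmonic : h.Monic)
    (hdeg : h.natDegree = m) (hroot : aeval (α + α⁻¹) h = 0) (hK : finrank F K = 2 * m) :
    ¬ IsSquare (h.eval 2 * h.eval (-2)) := by
  intro hsq
  have hmin := minpoly_add_inv_eq hgen hα hmonic hdeg hroot hK
  obtain ⟨w, hw⟩ := FiniteField.isSquare_gen_sq_sub_four hF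
    (adjoin.powerBasis (.of_finite F (α + α⁻¹))) (by rwa [adjoin.powerBasis_gen, minpoly_gen, hmin])
  have hw2 : (w : K) ^ 2 = (α + α⁻¹) ^ 2 - 4 := by
    have := congrArg (algebraMap F⟮α + α⁻¹⟯ K) hw.symm
    simp only [map_mul, map_sub, map_pow, map_ofNat, adjoin.powerBasis_gen,
      AdjoinSimple.algebraMap_gen] at this
    exact (pow_two _).trans this
  have hαL : α ∈ F⟮α + α⁻¹⟯ :=
    mem_of_sq_eq_add_inv_sq_sub_four (Ring.two_ne_zero (Algebra.ringChar_eq F K ▸ hF)) hα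
      (L := F⟮α + α⁻¹⟯.toSubfield) (mem_adjoin_simple_self F _) w.2 hw2
  have htop : F⟮α + α⁻¹⟯ = ⊤ := top_le_iff.mp (hgen ▸ adjoin_simple_le_iff.mpr hαL)
  have := finrank_adjoin_add_inv hgen hα hmonic.ne_zero hdeg hroot hK
  rw [htop, finrank_top', hK] at this
  omega

end AddInv

theorem meyn_irreducible_selfReciprocal_general
    (ℓ : ℕ) [Fact ℓ.Prime] (hℓodd : Odd ℓ)
    (N : ℕ) (hN : Even N) (hNpos : 0 < N)
    (f h : Polynomial (ZMod ℓ))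
    (hfdeg : f.natDegree = N)
    (hhmonic : h.Monic) (hhdeg : h.natDegree = N / 2)
    (hfh : f = ∑ i ∈ Finset.range (N / 2 + 1),
        Polynomial.C (h.coeff i) * Polynomial.X ^ (N / 2 - i) *
          (Polynomial.X ^ 2 + 1) ^ i)
    (hirr : Irreducible f) :
    Irreducible h ∧ ¬ IsSquare (h.eval 2 * h.eval (-2)) := by
  set m := N / 2
  have hNm : N = 2 * m := (Nat.two_mul_div_two_of_even hN).symm
  have hchar : ringChar (ZMod ℓ) ≠ 2 := by
    rw [ZMod.ringChar_zmod_n]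
    rintro rfl
    exact Nat.not_odd_iff_even.mpr even_two hℓodd
  have := Fact.mk hirr
  have : FiniteDimensional (ZMod ℓ) (AdjoinRoot f) := (AdjoinRoot.powerBasis hirr.ne_zero).finite
  have : Finite (AdjoinRoot f) := Module.finite_of_finite (ZMod ℓ)
  have hK : finrank (ZMod ℓ) (AdjoinRoot f) = 2 * m := by
    rw [(AdjoinRoot.powerBasis hirr.ne_zero).finrank, AdjoinRoot.powerBasis_dim, hfdeg, hNm]
  have hfα : aeval (AdjoinRoot.root f) f = 0 := by rw [AdjoinRoot.aeval_eq, AdjoinRoot.mk_self]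
  have hgen := adjoin_root_eq_top f
  generalize AdjoinRoot.root f = α at hfα hgen
  have hα : α ≠ 0 := hirr.ne_zero_of_aeval_eq_zero (by omega) hfα
  have hroot : aeval (α + α⁻¹) h = 0 := by
    have := (congrArg (aeval α) hfh).symm.trans hfα
    rw [aeval_sum_X_pow_mul_X_sq_add_one_pow hhdeg.le hα] at this
    exact (mul_eq_zero.mp this).resolve_left (pow_ne_zero _ hα)
  refine ⟨minpoly_add_inv_eq hgen hα hhmonic hhdeg hroot hK ▸ minpoly.irreducible (.of_finite _ _),
    not_isSquare_eval_two_mul_eval_neg_two hchar hgen hα (by omega) hhmonic hhdeg hroot hK⟩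

/-- **Meyn.** Let `ℓ` be an odd prime and `f` a self-reciprocal monic
polynomial of even degree `N` over `F_ℓ`, written as `f(x) = x^{N/2} h(x + x⁻¹)` with `h`
monic of degree `N/2` (equivalently, `f = ∑_i h_i · x^{N/2−i} (x²+1)^i`). If `f` is
irreducible over `F_ℓ`, then `h` is irreducible and `h(2)·h(−2)` is a nonsquare in `F_ℓ`. -/
theorem meyn_irreducible_selfReciprocal
    (ℓ : ℕ) [Fact ℓ.Prime] (hℓodd : Odd ℓ)
    (N : ℕ) (hN : Even N) (hNpos : 0 < N)
    (f h : Polynomial (ZMod ℓ))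
    (hfmonic : f.Monic) (hfdeg : f.natDegree = N)
    (hfself : Polynomial.reflect N f = f)
    (hhmonic : h.Monic) (hhdeg : h.natDegree = N / 2)
    (hfh : f = ∑ i ∈ Finset.range (N / 2 + 1),
        Polynomial.C (h.coeff i) * Polynomial.X ^ (N / 2 - i) *
          (Polynomial.X ^ 2 + 1) ^ i)
    (hirr : Irreducible f) :
    Irreducible h ∧ ¬ IsSquare (h.eval 2 * h.eval (-2)) :=
  meyn_irreducible_selfReciprocal_general ℓ hℓodd N hN hNpos f h hfdeg hhmonic hhdeg hfh hirr
end

section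
/- Let G be a discrete group, G^g a normal subgroup, S a symmetric generating set of G^g admitting a relation s₁⋯s_c = 1 of odd length c. Let (p_s)_{s∈S} be strictly positive with ∑ p_s = 1 and p_{s⁻¹} = p_s, and let π: G^g → U(V) be a finite-dimensional unitary representation. Set M = ∑_{s∈S} p_s π(s) ∈ End(V). Then M is self-adjoint and its smallest eigenvalue is at least −1 + δ⁻ where δ⁻ = (2/c²)·min{p_{s_i} : 1 ≤ i ≤ c} > 0; equivalently, ‖v‖² ≤ (c²/2)·(min_i p_{s_i})⁻¹·⟨(Id + M)v, v⟩ for all v ∈ V. -/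
/-!
Along the relation, the prefix products `gₖ = s₀ ⋯ sₖ₋₁` form a closed walk of odd length, so
`v + v` is the alternating sum of the vectors `π gₖ v + π gₖ₊₁ v = π gₖ (v + π sₖ v)`, whence
`2‖v‖ ≤ ∑ᵢ ‖v + π sᵢ v‖`. On the other hand `re ⟪v + M v, v⟫ = ∑ₜ pₜ ‖v + π t v‖² / 2`, which
bounds each `‖v + π sᵢ v‖²` by `2 pₛᵢ⁻¹ re ⟪v + M v, v⟫`; Cauchy–Schwarz then gives the factor `c²`.
-/

open scoped InnerProductSpace

open Finset RCLike

theorem sum_range_neg_one_pow_smul_add_succ {E : Type*} [AddCommGroup E] (f : ℕ → E) (n : ℕ) :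
    ∑ k ∈ range n, (-1 : ℤˣ) ^ k • (f k + f (k + 1)) = f 0 - (-1 : ℤˣ) ^ n • f n := by
  induction n with
  | zero => simp
  | succ n ih =>
    rw [sum_range_succ, ih, pow_succ, mul_smul]
    simp only [Units.neg_smul, one_smul, smul_neg, smul_add]
    abel

theorem norm_add_le_sum_range_norm_add_succ_of_odd {E : Type*} [SeminormedAddCommGroup E]
    (f : ℕ → E) {c : ℕ} (hc : Odd c) :
    ‖f 0 + f c‖ ≤ ∑ k ∈ range c, ‖f k + f (k + 1)‖ :=
  calc ‖f 0 + f c‖ = ‖∑ k ∈ range c, (-1 : ℤˣ) ^ k • (f k + f (k + 1))‖ := by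
        rw [sum_range_neg_one_pow_smul_add_succ, hc.neg_one_pow, Units.neg_smul, one_smul,
          sub_neg_eq_add]
    _ ≤ ∑ k ∈ range c, ‖f k + f (k + 1)‖ :=
        (norm_sum_le _ _).trans_eq (sum_congr rfl fun _ _ => norm_units_zsmul _ _)

theorem norm_add_self_le_sum_norm_add_map_of_prod_eq_one {R G E : Type*} [Semiring R] [Monoid G]
    [SeminormedAddCommGroup E] [Module R E] (π : G →* (E ≃ₗᵢ[R] E)) {c : ℕ} (hc : Odd c)
    (s : Fin c → G) (hrel : (List.ofFn s).prod = 1) (v : E) :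
    ‖v + v‖ ≤ ∑ i, ‖v + π (s i) v‖ := by
  set g : ℕ → G := fun k => ((List.ofFn s).take k).prod
  have hg_succ (i : Fin c) : g (i + 1) = g i * s i := by
    simp [g, List.prod_take_succ _ _ (by simp : (i : ℕ) < (List.ofFn s).length)]
  have hgc : g c = 1 := by
    rw [show g c = ((List.ofFn s).take c).prod from rfl, List.take_of_length_le (by simp), hrel]
  calc ‖v + v‖ = ‖π (g 0) v + π (g c) v‖ := by simp [g, hgc]
    _ ≤ ∑ k ∈ range c, ‖π (g k) v + π (g (k + 1)) v‖ :=
        norm_add_le_sum_range_norm_add_succ_of_odd (fun k => π (g k) v) hc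
    _ = ∑ i, ‖v + π (s i) v‖ := by
        rw [← Fin.sum_univ_eq_sum_range (fun k => ‖π (g k) v + π (g (k + 1)) v‖)]
        refine sum_congr rfl fun i _ => ?_
        rw [hg_succ, map_mul, LinearIsometryEquiv.coe_mul, Function.comp_apply, ← map_add,
          LinearIsometryEquiv.norm_map]

section AveragingOperator

variable {𝕜 E G : Type*} [RCLike 𝕜] [NormedAddCommGroup E] [InnerProductSpace 𝕜 E]
  [CompleteSpace E] [Group G] (p : G → ℝ) (π : G →* (E ≃ₗᵢ[𝕜] E))

noncomputable def averagingOperator (v : E) : E :=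
  ∑' t, (p t : 𝕜) • π t v

variable {p}

theorem hasSum_averagingOperator (hp : Summable p) (v : E) :
    HasSum (fun t => (p t : 𝕜) • π t v) (averagingOperator p π v) := by
  refine (Summable.of_norm ?_).hasSum
  simpa [norm_smul, LinearIsometryEquiv.norm_map] using hp.abs.mul_right ‖v‖

theorem hasSum_inner_averagingOperator_right (hp : Summable p) (v w : E) :
    HasSum (fun t => (p t : 𝕜) * ⟪v, π t w⟫_𝕜) ⟪v, averagingOperator p π w⟫_𝕜 := by
  simpa [inner_smul_right] using (hasSum_averagingOperator π hp w).mapL (innerSL 𝕜 v)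

theorem inner_averagingOperator_left (hp : Summable p) (hp_inv : ∀ t, p t⁻¹ = p t) (v w : E) :
    ⟪averagingOperator p π v, w⟫_𝕜 = ⟪v, averagingOperator p π w⟫_𝕜 := by
  have h := (hasSum_conj' 𝕜).mpr (hasSum_inner_averagingOperator_right π hp w v)
  simp only [map_mul, conj_ofReal, inner_conj_symm, LinearIsometryEquiv.inner_map_eq_flip] at h
  have h' : HasSum (fun t => (p t : 𝕜) * ⟪v, π t w⟫_𝕜) ⟪averagingOperator p π v, w⟫_𝕜 := by
    rw [← (Equiv.inv G).hasSum_iff]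
    simpa only [Function.comp_def, Equiv.inv_apply, hp_inv, map_inv,
      LinearIsometryEquiv.coe_inv] using h
  exact h'.unique (hasSum_inner_averagingOperator_right π hp v w)

theorem hasSum_re_inner_add_averagingOperator (hp : HasSum p 1) (v : E) :
    HasSum (fun t => p t * (‖v + π t v‖ ^ 2 / 2)) (re ⟪v + averagingOperator p π v, v⟫_𝕜) := by
  have h := (hp.mul_right (‖v‖ ^ 2)).add
    (hasSum_re 𝕜 (hasSum_inner_averagingOperator_right π hp.summable v v))
  rw [one_mul] at h
  rw [inner_add_left, map_add, inner_re_symm (𝕜 := 𝕜) (averagingOperator p π v),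
    inner_self_eq_norm_sq]
  refine h.congr_fun fun t => ?_
  rw [re_ofReal_mul, @norm_add_sq 𝕜, LinearIsometryEquiv.norm_map]
  ring

theorem mul_norm_add_map_sq_le (hp0 : ∀ t, 0 ≤ p t) (hp : HasSum p 1) (v : E) (t : G) :
    p t * ‖v + π t v‖ ^ 2 ≤ 2 * re ⟪v + averagingOperator p π v, v⟫_𝕜 := by
  have := le_hasSum (hasSum_re_inner_add_averagingOperator π hp v) t
    fun t _ => mul_nonneg (hp0 t) (by positivity)
  linarith

theorem norm_sq_le_re_inner_add_averagingOperator (hp0 : ∀ t, 0 ≤ p t) (hp : HasSum p 1)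
    {c : ℕ} (hc : Odd c) (s : Fin c → G) (hrel : (List.ofFn s).prod = 1) {m : ℝ} (hm : 0 < m)
    (hms : ∀ i, m ≤ p (s i)) (v : E) :
    ‖v‖ ^ 2 ≤ (c ^ 2 / 2) * m⁻¹ * re ⟪v + averagingOperator p π v, v⟫_𝕜 := by
  set R := re ⟪v + averagingOperator p π v, v⟫_𝕜
  have htel : 2 * ‖v‖ ≤ ∑ i, ‖v + π (s i) v‖ := by
    simpa [← two_nsmul, norm_nsmul 𝕜] using
      norm_add_self_le_sum_norm_add_map_of_prod_eq_one π hc s hrel v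
  have hcs : (∑ i, ‖v + π (s i) v‖) ^ 2 ≤ c * ∑ i, ‖v + π (s i) v‖ ^ 2 := by
    simpa using sq_sum_le_card_mul_sum_sq (s := univ) (f := fun i => ‖v + π (s i) v‖)
  have hterm (i : Fin c) : m * ‖v + π (s i) v‖ ^ 2 ≤ 2 * R :=
    (mul_le_mul_of_nonneg_right (hms i) (sq_nonneg _)).trans (mul_norm_add_map_sq_le π hp0 hp v _)
  have hsum_sq : m * ∑ i, ‖v + π (s i) v‖ ^ 2 ≤ c * (2 * R) := by
    simpa [mul_sum] using sum_le_sum fun i (_ : i ∈ univ) => hterm i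
  have hsq := pow_le_pow_left₀ (by positivity) htel 2
  rw [mul_assoc, ← div_eq_inv_mul, mul_div_assoc', le_div_iff₀ hm]
  nlinarith

end AveragingOperator

theorem averaging_operator_lower_spectral_bound_general
    {G : Type*} [Group G] (Gg : Subgroup G)
    (S : Set Gg) (p : Gg → ℝ) (hpos : ∀ s ∈ S, 0 < p s) (hsupp : ∀ s ∉ S, p s = 0)
    (hpsym : ∀ s : Gg, p s⁻¹ = p s) (hsum : HasSum p 1)
    {V : Type*} [NormedAddCommGroup V] [InnerProductSpace ℂ V] [FiniteDimensional ℂ V]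
    (π : Gg →* (V ≃ₗᵢ[ℂ] V))
    (c : ℕ) (hc : Odd c)
    (s : Fin c → Gg) (hsS : ∀ i, s i ∈ S) (hrel : (List.ofFn s).prod = 1)
    (M : V → V) (hM : ∀ v : V, M v = ∑' t : Gg, p t • (π t v)) :
    (∀ v w : V, ⟪M v, w⟫_ℂ = ⟪v, M w⟫_ℂ) ∧
    (∀ v : V, ‖v‖ ^ 2 ≤
      ((c : ℝ) ^ 2 / 2) * (sInf (Set.range fun i => p (s i)))⁻¹ *
        RCLike.re (⟪v + M v, v⟫_ℂ)) := by
  have hp0 (t : Gg) : 0 ≤ p t := by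
    by_cases ht : t ∈ S
    · exact (hpos t ht).le
    · exact (hsupp t ht).ge
  obtain rfl : M = averagingOperator p π :=
    funext fun v => by simp only [hM, averagingOperator, RCLike.real_smul_eq_coe_smul (K := ℂ)]
  have : Nonempty (Fin c) := ⟨⟨0, hc.pos⟩⟩
  obtain ⟨i₀, hi₀⟩ := (Set.range_nonempty _).csInf_mem (Set.finite_range fun i => p (s i))
  refine ⟨inner_averagingOperator_left π hsum.summable hpsym, fun v => ?_⟩
  refine norm_sq_le_re_inner_add_averagingOperator π hp0 hsum hc s hrel ?_
    (fun i => csInf_le (Set.finite_range _).bddBelow ⟨i, rfl⟩) v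
  exact hi₀ ▸ hpos _ (hsS i₀)

/-- Let `G` be a discrete group, `G^g` a normal subgroup, `S ⊆ G^g` a
symmetric generating set admitting a relation `s₁ ⋯ s_c = 1` of odd length `c`, and
`(p_s)` a symmetric, strictly positive probability distribution supported on `S`. Let
`π` be a finite-dimensional unitary representation of `G^g` and
`M = ∑_s p_s π(s)` the averaging operator. Then `M` is self-adjoint and
`‖v‖² ≤ (c²/2)·(min_i p_{s_i})⁻¹ · ⟨(Id + M)v, v⟩` for every `v`
(so the smallest eigenvalue of `M` is at least `−1 + (2/c²)·min_i p_{s_i}`). -/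
theorem averaging_operator_lower_spectral_bound
    {G : Type*} [Group G] (Gg : Subgroup G) [Gg.Normal]
    (S : Set Gg) (hsym : ∀ s ∈ S, s⁻¹ ∈ S) (hgen : Subgroup.closure S = ⊤)
    (p : Gg → ℝ) (hpos : ∀ s ∈ S, 0 < p s) (hsupp : ∀ s ∉ S, p s = 0)
    (hpsym : ∀ s : Gg, p s⁻¹ = p s) (hsum : HasSum p 1)
    {V : Type*} [NormedAddCommGroup V] [InnerProductSpace ℂ V] [FiniteDimensional ℂ V]
    (π : Gg →* (V ≃ₗᵢ[ℂ] V))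
    (c : ℕ) (hc : Odd c) (hc1 : 1 ≤ c)
    (s : Fin c → Gg) (hsS : ∀ i, s i ∈ S) (hrel : (List.ofFn s).prod = 1)
    (M : V → V) (hM : ∀ v : V, M v = ∑' t : Gg, p t • (π t v)) :
    (∀ v w : V, ⟪M v, w⟫_ℂ = ⟪v, M w⟫_ℂ) ∧
    (∀ v : V, ‖v‖ ^ 2 ≤
      ((c : ℝ) ^ 2 / 2) * (sInf (Set.range fun i => p (s i)))⁻¹ *
        RCLike.re (⟪v + M v, v⟫_ℂ)) :=
  averaging_operator_lower_spectral_bound_general Gg S p hpos hsupp hpsym hsum π c hc s hsS hrel M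
    hM
end
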